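/- arXiv:2002.07131 — 2 statements merged into one kernel-verified Lean document; each statement's English description precedes it below -/
import Mathlib

section
/- Let (M,g) be a Riemannian manifold and τ : M → (0,∞) a smooth function with τ(x) → 0 as x → ∞ (i.e., for every ε > 0 there is a compact set K ⊂ M with τ < ε outside K) and |dτ| ≤ c for some constant c > 0. Let γ_α : (0,∞) → (0,1] be smooth with γ_α(t) = t^α near 0. Then for every α ≥ 1/2, the function ρ_α = γ_α ∘ τ is an admissible rescaling function, i.e., there exists a coercive function h : M → ℝ (a proper smooth function bounded below) such that ρ_α² |dh| ∈ L^∞(M). -/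
open Real Set Filter
open scoped Manifold

theorem aux_norm_comp (a : ℝ) {F : Type*} [NormedAddCommGroup F] [NormedSpace ℝ F]
    (L : F →L[ℝ] ℝ) :
    ‖(ContinuousLinearMap.smulRight (1 : ℝ →L[ℝ] ℝ) a).comp L‖ = ‖L‖ * ‖a‖ := by
  have h : (ContinuousLinearMap.smulRight (1 : ℝ →L[ℝ] ℝ) a).comp L
      = ContinuousLinearMap.smulRight L a := by
    ext v; simp [mul_comm]
  rw [h, ContinuousLinearMap.norm_smulRight_apply]

set_option maxHeartbeats 1000000 in
/-- Let `M` be a (Riemannian) manifold and `τ : M → (0,∞)` smooth with `τ(x) → 0` at infinity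
and `|dτ| ≤ c`.  If `γ_α : (0,∞) → (0,1]` is smooth with `γ_α(t) = t^α` near `0`, then for
every `α ≥ 1/2` the function `ρ_α = γ_α ∘ τ` is an admissible rescaling function: there is a
coercive function `h : M → ℝ` (proper, smooth, bounded below) with `ρ_α² |dh|` bounded. -/
theorem stmt6 {E : Type*} [NormedAddCommGroup E] [NormedSpace ℝ E]
    {M : Type*} [TopologicalSpace M] [ChartedSpace E M]
    [IsManifold (modelWithCornersSelf ℝ E) ((⊤ : ℕ∞) : WithTop ℕ∞) M]
    (τ : M → ℝ)
    (hτs : ContMDiff (modelWithCornersSelf ℝ E) (modelWithCornersSelf ℝ ℝ) (⊤ : ℕ∞) τ)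
    (hτpos : ∀ x, 0 < τ x)
    (hτ0 : Tendsto τ (cocompact M) (nhds 0))
    (c : ℝ) (hc : 0 < c)
    (hdτ : ∀ x, @norm (E →L[ℝ] ℝ) _ (mfderiv (modelWithCornersSelf ℝ E) (modelWithCornersSelf ℝ ℝ) τ x) ≤ c)
    (α : ℝ) (hα : 1 / 2 ≤ α)
    (γ : ℝ → ℝ) (hγs : ContDiffOn ℝ (⊤ : ℕ∞) γ (Ioi 0))
    (hγrange : ∀ t ∈ Ioi (0 : ℝ), 0 < γ t ∧ γ t ≤ 1)
    (hγ0 : ∃ ε > 0, ∀ t ∈ Ioo (0 : ℝ) ε, γ t = t ^ α) :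
    ∃ h : M → ℝ,
      ContMDiff (modelWithCornersSelf ℝ E) (modelWithCornersSelf ℝ ℝ) (⊤ : ℕ∞) h ∧
      (∀ K : Set ℝ, IsCompact K → IsCompact (h ⁻¹' K)) ∧
      BddBelow (range h) ∧
      ∃ C : ℝ, ∀ x,
        (γ (τ x)) ^ 2 *
            @norm (E →L[ℝ] ℝ) _ (mfderiv (modelWithCornersSelf ℝ E) (modelWithCornersSelf ℝ ℝ) h x) ≤ C := by
  obtain ⟨ε, hε, hγε⟩ := hγ0
  set ε' : ℝ := min ε 1 with hε'def
  have hε' : 0 < ε' := lt_min hε one_pos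
  have hε'1 : ε' ≤ 1 := min_le_right _ _
  refine ⟨fun x => -Real.log (τ x), ?_, ?_, ?_, ?_⟩
  · -- smoothness
    intro x
    have h1 : ContDiffAt ℝ (⊤ : ℕ∞) (fun t : ℝ => -Real.log t) (τ x) :=
      (Real.contDiffAt_log.mpr (hτpos x).ne').neg
    have h2 : ContMDiffAt (modelWithCornersSelf ℝ ℝ) (modelWithCornersSelf ℝ ℝ) (⊤ : ℕ∞)
        (fun t : ℝ => -Real.log t) (τ x) := (h1.of_le le_rfl).contMDiffAt
    exact (h2.of_le (by simp)).comp x (hτs x)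
  · -- properness
    intro K hK
    obtain ⟨b, hb⟩ := hK.bddAbove
    have hmem : Iio (Real.exp (-b)) ∈ nhds (0 : ℝ) :=
      Iio_mem_nhds (Real.exp_pos _)
    have := hτ0 hmem
    rw [Filter.mem_map, Filter.mem_cocompact] at this
    obtain ⟨C, hCc, hCsub⟩ := this
    apply hCc.of_isClosed_subset
    · exact hK.isClosed.preimage (by
        have : Continuous τ := hτs.continuous
        exact (this.log fun x => (hτpos x).ne').neg)
    · intro x hx
      by_contra hxC
      have h1 : τ x < Real.exp (-b) := hCsub (Set.mem_compl hxC)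
      have h2 : -Real.log (τ x) ≤ b := hb hx
      have h3 : Real.log (τ x) < -b := by
        have := Real.log_lt_log (hτpos x) h1
        rwa [Real.log_exp] at this
      linarith
  · -- bounded below
    have hmem : Iio (1 : ℝ) ∈ nhds (0 : ℝ) := Iio_mem_nhds one_pos
    have := hτ0 hmem
    rw [Filter.mem_map, Filter.mem_cocompact] at this
    obtain ⟨C, hCc, hCsub⟩ := this
    obtain ⟨m, hm⟩ := (hCc.image hτs.continuous).bddAbove
    refine ⟨-Real.log (max 1 m), ?_⟩
    rintro y ⟨x, rfl⟩
    have hτle : τ x ≤ max 1 m := by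
      by_cases hxC : x ∈ C
      · exact le_trans (hm (Set.mem_image_of_mem τ hxC)) (le_max_right _ _)
      · exact le_trans (le_of_lt (hCsub (Set.mem_compl hxC))) (le_max_left _ _)
    have := Real.log_le_log (hτpos x) hτle
    simp only [neg_le_neg_iff]
    linarith
  · -- gradient bound
    refine ⟨c / ε', fun x => ?_⟩
    have htpos := hτpos x
    -- compute mfderiv
    have hgd : HasDerivAt (fun t : ℝ => -Real.log t) (-(τ x)⁻¹) (τ x) :=
      (Real.hasDerivAt_log htpos.ne').neg
    have hgm : MDifferentiableAt (modelWithCornersSelf ℝ ℝ) (modelWithCornersSelf ℝ ℝ)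
        (fun t : ℝ => -Real.log t) (τ x) :=
      hgd.differentiableAt.mdifferentiableAt
    have hτm : MDifferentiableAt (modelWithCornersSelf ℝ E) (modelWithCornersSelf ℝ ℝ)
        τ x := (hτs x).mdifferentiableAt (by simp)
    have hcomp := mfderiv_comp x hgm hτm
    have hgfd : mfderiv (modelWithCornersSelf ℝ ℝ) (modelWithCornersSelf ℝ ℝ)
        (fun t : ℝ => -Real.log t) (τ x)
        = ContinuousLinearMap.smulRight (1 : ℝ →L[ℝ] ℝ) (-(τ x)⁻¹) := by
      rw [mfderiv_eq_fderiv]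
      exact hgd.hasFDerivAt.fderiv
    have hkey : @norm (E →L[ℝ] ℝ) _ (mfderiv (modelWithCornersSelf ℝ E) (modelWithCornersSelf ℝ ℝ)
        (fun x => -Real.log (τ x)) x)
        ≤ (τ x)⁻¹ * @norm (E →L[ℝ] ℝ) _ (mfderiv (modelWithCornersSelf ℝ E) (modelWithCornersSelf ℝ ℝ) τ x) := by
      have heq : @norm (E →L[ℝ] ℝ) _ (mfderiv (modelWithCornersSelf ℝ E) (modelWithCornersSelf ℝ ℝ)
          (fun x => -Real.log (τ x)) x)
          = @norm (E →L[ℝ] ℝ) _ (mfderiv (modelWithCornersSelf ℝ E) (modelWithCornersSelf ℝ ℝ) τ x)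
            * ‖(-(τ x)⁻¹ : ℝ)‖ := by
        rw [show (fun x => -Real.log (τ x)) = (fun t : ℝ => -Real.log t) ∘ τ from rfl,
          hcomp, hgfd]
        exact aux_norm_comp (F := E) (-(τ x)⁻¹)
          (mfderiv (modelWithCornersSelf ℝ E) (modelWithCornersSelf ℝ ℝ) τ x)
      rw [heq, norm_neg, Real.norm_eq_abs, abs_of_pos (inv_pos.mpr htpos), mul_comm]
    have hγpos := (hγrange (τ x) htpos).1
    have hγle := (hγrange (τ x) htpos).2
    have hdb := hdτ x
    have hdnn : (0:ℝ) ≤ @norm (E →L[ℝ] ℝ) _ (mfderiv (modelWithCornersSelf ℝ E) (modelWithCornersSelf ℝ ℝ) τ x) :=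
      norm_nonneg _
    -- main estimate: γ(τ x)^2 * (τ x)⁻¹ ≤ 1/ε'
    have hmain : (γ (τ x)) ^ 2 * (τ x)⁻¹ ≤ 1 / ε' := by
      rcases lt_or_ge (τ x) ε' with hlt | hge
      · have hτε : τ x < ε := lt_of_lt_of_le hlt (min_le_left _ _)
        have hτ1 : τ x ≤ 1 := le_of_lt (lt_of_lt_of_le hlt hε'1)
        rw [hγε (τ x) ⟨htpos, hτε⟩]
        have : ((τ x) ^ α) ^ 2 * (τ x)⁻¹ = (τ x) ^ (2 * α - 1) := by
          rw [← Real.rpow_natCast ((τ x) ^ α) 2, ← Real.rpow_mul htpos.le,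
            ← Real.rpow_neg_one (τ x), ← Real.rpow_add htpos]
          congr 1
          push_cast
          ring
        rw [this]
        have h2 : (τ x) ^ (2 * α - 1) ≤ 1 :=
          Real.rpow_le_one htpos.le hτ1 (by linarith)
        calc (τ x) ^ (2 * α - 1) ≤ 1 := h2
          _ ≤ 1 / ε' := by
            rw [le_div_iff₀ hε']; linarith
      · have h2 : (τ x)⁻¹ ≤ 1 / ε' := by
          rw [one_div]
          exact inv_anti₀ hε' hge
        have h3 : (γ (τ x)) ^ 2 ≤ 1 := by
          nlinarith
        calc (γ (τ x)) ^ 2 * (τ x)⁻¹ ≤ 1 * (τ x)⁻¹ := by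
              apply mul_le_mul_of_nonneg_right h3 (inv_nonneg.mpr htpos.le)
          _ = (τ x)⁻¹ := one_mul _
          _ ≤ 1 / ε' := h2
    calc (γ (τ x)) ^ 2 * @norm (E →L[ℝ] ℝ) _ (mfderiv (modelWithCornersSelf ℝ E) (modelWithCornersSelf ℝ ℝ)
          (fun x => -Real.log (τ x)) x)
        ≤ (γ (τ x)) ^ 2 * ((τ x)⁻¹ * c) := by
          refine mul_le_mul_of_nonneg_left (le_trans hkey ?_) (sq_nonneg _)
          exact mul_le_mul_of_nonneg_left hdb (inv_nonneg.mpr htpos.le)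
      _ = ((γ (τ x)) ^ 2 * (τ x)⁻¹) * c := by ring
      _ ≤ (1 / ε') * c := mul_le_mul_of_nonneg_right hmain hc.le
      _ = c / ε' := by ring
end

section
/- Let Y : (0,∞) → [0,∞) and Z : (0,∞) → (0,1] be smooth, and suppose there exist 0 < L ≤ 1, δ > 0, Y₀ > 0, and c > 0 such that: Y = Y₀ on an open neighborhood U₀ of (0,L]; Z = √L on an open neighborhood U₁ of [L,∞); Z(t) ≤ (1+δ)√t on U₀; 0 ≤ Z'(t) ≤ (1+δ)/(2√t) for all t > 0; Y₀² > (1+δ)⁴ω/4; and (n̄σ̄ω/(1+ω))L² + Y(t)² − L|Y'(t)| ≥ c on U₁, where ω > 0. Then there exists c' > 0 such that (n̄σ̄ω/(1+ω))Z(t)⁴ − ωZ(t)²|Z'(t)|² + Y(t)² − Z(t)²|Y'(t)| ≥ c' for all t > 0. -/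
open Real Set

/-- Gluing lemma for the rescaling function `Z` and the potential `Y`: under the stated
hypotheses on neighborhoods `U₀` of `(0,L]` and `U₁` of `[L,∞)` covering `(0,∞)`,
the quantity `(n̄σ̄ω/(1+ω))Z⁴ − ωZ²|Z'|² + Y² − Z²|Y'|` is uniformly positive on `(0,∞)`. -/
theorem stmt15 (n : ℕ) (hn : 2 ≤ n) (σ ω L δ Y₀ c : ℝ)
    (hσ : 0 < σ) (hω : 0 < ω) (hL : 0 < L) (hL1 : L ≤ 1) (hδ : 0 < δ) (hc : 0 < c)
    (Y Z : ℝ → ℝ)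
    (hYs : ContDiffOn ℝ (⊤ : ℕ∞) Y (Ioi 0)) (hZs : ContDiffOn ℝ (⊤ : ℕ∞) Z (Ioi 0))
    (hYrange : ∀ t ∈ Ioi (0 : ℝ), 0 ≤ Y t)
    (hZrange : ∀ t ∈ Ioi (0 : ℝ), 0 < Z t ∧ Z t ≤ 1)
    (U₀ U₁ : Set ℝ) (hU₀ : IsOpen U₀) (hU₁ : IsOpen U₁)
    (hU₀sub : Ioc 0 L ⊆ U₀) (hU₁sub : Ici L ⊆ U₁) (hcover : Ioi 0 ⊆ U₀ ∪ U₁)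
    (hY0 : ∀ t ∈ U₀, Y t = Y₀)
    (hZ1 : ∀ t ∈ U₁, Z t = Real.sqrt L)
    (hZle : ∀ t ∈ U₀ ∩ Ioi 0, Z t ≤ (1 + δ) * Real.sqrt t)
    (hZ' : ∀ t ∈ Ioi (0 : ℝ), 0 ≤ deriv Z t ∧ deriv Z t ≤ (1 + δ) / (2 * Real.sqrt t))
    (hY₀sq : (1 + δ) ^ 4 * ω / 4 < Y₀ ^ 2)
    (hineq : ∀ t ∈ U₁ ∩ Ioi 0,
      c ≤ ((n : ℝ) / ((n : ℝ) - 1)) * (σ / 4) * ω / (1 + ω) * L ^ 2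
            + (Y t) ^ 2 - L * |deriv Y t|) :
    ∃ c' > 0, ∀ t ∈ Ioi (0 : ℝ),
      c' ≤ ((n : ℝ) / ((n : ℝ) - 1)) * (σ / 4) * ω / (1 + ω) * (Z t) ^ 4
            - ω * (Z t) ^ 2 * |deriv Z t| ^ 2 + (Y t) ^ 2 - (Z t) ^ 2 * |deriv Y t| := by

  have hn1 : (1:ℝ) ≤ (n:ℝ) - 1 := by
    have : (2:ℝ) ≤ (n:ℝ) := by exact_mod_cast hn
    linarith
  have hA : 0 ≤ ((n : ℝ) / ((n : ℝ) - 1)) * (σ / 4) * ω / (1 + ω) := by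
    apply div_nonneg _ (by linarith)
    apply mul_nonneg (mul_nonneg (div_nonneg (Nat.cast_nonneg n) (by linarith)) (by linarith)) hω.le
  obtain ⟨c₁, hc₁def⟩ : ∃ x : ℝ, x = Y₀ ^ 2 - (1 + δ) ^ 4 * ω / 4 := ⟨_, rfl⟩
  have hc₁ : 0 < c₁ := by rw [hc₁def]; linarith
  refine ⟨min c c₁, lt_min hc hc₁, fun t ht => ?_⟩
  have ht0 : (0:ℝ) < t := ht
  rcases hcover ht with h0 | h1
  · -- t ∈ U₀
    have hYd : deriv Y t = 0 := by
      have h : Y =ᶠ[nhds t] fun _ => Y₀ :=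
        Filter.eventually_of_mem (hU₀.mem_nhds h0) hY0
      rw [h.deriv_eq]; exact deriv_const t Y₀
    have hYt : Y t = Y₀ := hY0 t h0
    have hZt := hZrange t ht
    have hZle' := hZle t ⟨h0, ht⟩
    have hZ'' := hZ' t ht
    have hst : (0:ℝ) < Real.sqrt t := Real.sqrt_pos.mpr ht0
    have h1 : (Z t) ^ 2 ≤ ((1 + δ) * Real.sqrt t) ^ 2 := by
      apply pow_le_pow_left₀ hZt.1.le hZle'
    have h2 : |deriv Z t| ^ 2 ≤ ((1 + δ) / (2 * Real.sqrt t)) ^ 2 := by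
      rw [abs_of_nonneg hZ''.1]
      apply pow_le_pow_left₀ hZ''.1 hZ''.2
    have h3 : ω * (Z t) ^ 2 * |deriv Z t| ^ 2
        ≤ ω * (((1 + δ) * Real.sqrt t) ^ 2 * ((1 + δ) / (2 * Real.sqrt t)) ^ 2) := by
      rw [mul_assoc]
      apply mul_le_mul_of_nonneg_left _ hω.le
      exact mul_le_mul h1 h2 (by positivity) (by positivity)
    have hts : Real.sqrt t ^ 2 = t := Real.sq_sqrt ht0.le
    have h4 : ((1 + δ) * Real.sqrt t) ^ 2 * ((1 + δ) / (2 * Real.sqrt t)) ^ 2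
        = (1 + δ) ^ 4 / 4 := by
      field_simp
      ring
    rw [h4] at h3
    have h5 : 0 ≤ ((n : ℝ) / ((n : ℝ) - 1)) * (σ / 4) * ω / (1 + ω) * (Z t) ^ 4 := by
      apply mul_nonneg hA (by positivity)
    have h6 : min c c₁ ≤ c₁ := min_le_right _ _
    rw [hYt, hYd]
    simp only [abs_zero]
    have hB : ω * Z t ^ 2 * |deriv Z t| ^ 2 ≤ (1 + δ) ^ 4 * ω / 4 := by linarith only [h3]
    linarith only [hB, h5, h6, hc₁def]
  · -- t ∈ U₁
    have hZd : deriv Z t = 0 := by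
      have h : Z =ᶠ[nhds t] fun _ => Real.sqrt L :=
        Filter.eventually_of_mem (hU₁.mem_nhds h1) hZ1
      rw [h.deriv_eq]; exact deriv_const t _
    have hZt : Z t = Real.sqrt L := hZ1 t h1
    have hZ2 : (Z t) ^ 2 = L := by rw [hZt]; exact Real.sq_sqrt hL.le
    have hZ4 : (Z t) ^ 4 = L ^ 2 := by
      have : (Z t) ^ 4 = ((Z t) ^ 2) ^ 2 := by ring
      rw [this, hZ2]
    have key := hineq t ⟨h1, ht⟩
    rw [hZd, hZ2, hZ4]
    simp only [abs_zero]
    have h6 : min c c₁ ≤ c := min_le_left _ _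
    linarith only [key, h6]
end
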